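/- For the FF bi-objective function f_1(x) = 1 − exp(−∑ᵢ(xᵢ − 1/√n)²), f_2(x) = 1 − exp(−∑ᵢ(xᵢ + 1/√n)²) on [−4,4]ⁿ, every point of the form x = (t/√n, ..., t/√n) with t ∈ [−1, 1] is Pareto optimal. -/

import Mathlib

/-!
Put `p = (1/√n, …, 1/√n)`. Then `f₁ y = φ (dist y p)` and `f₂ y = φ (dist y (-p))` with
`φ r = 1 - exp (-r²)` strictly increasing on `[0, ∞)`, so Pareto optimality for `(f₁, f₂)` is
Pareto optimality for the two distances. The point `x = t • p` lies on the segment `[p, -p]`, so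
`dist x p + dist x (-p) = dist p (-p)`, while every `y` has `dist y p + dist y (-p) ≥ dist p (-p)`
by the triangle inequality: no `y` can improve on one distance without worsening the other.
-/

open Real

section Pareto

variable {α β γ : Type*}

def IsParetoOptimal [Preorder β] (s : Set α) (f g : α → β) (x : α) : Prop :=
  ¬ ∃ y ∈ s, (f y ≤ f x ∧ g y ≤ g x) ∧ (f y < f x ∨ g y < g x)

theorem IsParetoOptimal.comp_strictMonoOn [LinearOrder β] [Preorder γ] {s : Set α}
    {f g : α → β} {x : α} {φ : β → γ} {T : Set β} (hφ : StrictMonoOn φ T)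
    (hfT : ∀ y, f y ∈ T) (hgT : ∀ y, g y ∈ T) (h : IsParetoOptimal s f g x) :
    IsParetoOptimal s (φ ∘ f) (φ ∘ g) x := by
  simpa only [IsParetoOptimal, Function.comp_apply, hφ.le_iff_le (hfT _) (hfT _),
    hφ.le_iff_le (hgT _) (hgT _), hφ.lt_iff_lt (hfT _) (hfT _),
    hφ.lt_iff_lt (hgT _) (hgT _)] using h

theorem isParetoOptimal_dist_of_dist_add_dist_eq [PseudoMetricSpace α] {p q x : α}
    (h : dist x p + dist x q = dist p q) (s : Set α) :
    IsParetoOptimal s (dist · p) (dist · q) x := by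
  rintro ⟨y, -, ⟨hp, hq⟩, hlt⟩
  have := dist_triangle_left p q y
  rcases hlt with hlt | hlt <;> linarith

end Pareto

theorem strictMonoOn_one_sub_exp_neg_sq :
    StrictMonoOn (fun r : ℝ => 1 - exp (-r ^ 2)) (Set.Ici 0) :=
  fun a ha _ _ hab => by
    simpa using exp_lt_exp.2 (neg_lt_neg (pow_lt_pow_left₀ hab ha two_ne_zero))

theorem smul_mem_segment_self_neg {E : Type*} [AddCommGroup E] [Module ℝ E] (v : E) {t : ℝ}
    (ht : t ∈ Set.Icc (-1 : ℝ) 1) : t • v ∈ segment ℝ v (-v) := by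
  refine ⟨(1 + t) / 2, (1 - t) / 2, by linarith [ht.1], by linarith [ht.2], by ring, ?_⟩
  rw [smul_neg, ← sub_eq_add_neg, ← sub_smul]
  ring_nf

theorem EuclideanSpace.sum_sq_sub_const_eq_dist_sq {ι : Type*} [Fintype ι]
    (y : EuclideanSpace ℝ ι) (c : ℝ) :
    ∑ i, (y i - c) ^ 2 = dist y (WithLp.toLp 2 fun _ => c) ^ 2 := by
  simp only [EuclideanSpace.dist_sq_eq, Real.dist_eq, sq_abs]

theorem ff_segment_pareto_general (n : ℕ)
    (S : Set (EuclideanSpace ℝ (Fin n)))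
    (hS : S = {x | ∀ i, x i ∈ Set.Icc (-4 : ℝ) 4})
    (f₁ f₂ : EuclideanSpace ℝ (Fin n) → ℝ)
    (hf₁ : ∀ x, f₁ x = 1 - Real.exp (-(∑ i, (x i - 1 / Real.sqrt n) ^ 2)))
    (hf₂ : ∀ x, f₂ x = 1 - Real.exp (-(∑ i, (x i + 1 / Real.sqrt n) ^ 2)))
    (t : ℝ) (ht : t ∈ Set.Icc (-1 : ℝ) 1)
    (x : EuclideanSpace ℝ (Fin n)) (hx : ∀ i, x i = t / Real.sqrt n) :
    x ∈ S ∧ ¬ ∃ y ∈ S, (f₁ y ≤ f₁ x ∧ f₂ y ≤ f₂ x) ∧ (f₁ y < f₁ x ∨ f₂ y < f₂ x) := by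
  set p : EuclideanSpace ℝ (Fin n) := WithLp.toLp 2 fun _ => 1 / √n
  have hf₁p : f₁ = (fun r => 1 - exp (-r ^ 2)) ∘ (dist · p) := funext fun y => by
    rw [hf₁, EuclideanSpace.sum_sq_sub_const_eq_dist_sq]; rfl
  have hf₂p : f₂ = (fun r => 1 - exp (-r ^ 2)) ∘ (dist · (-p)) := funext fun y => by
    simp_rw [hf₂, ← sub_neg_eq_add, EuclideanSpace.sum_sq_sub_const_eq_dist_sq]; rfl
  have hxp : x = t • p := by
    ext i
    simp [p, hx, div_eq_mul_one_div t]
  refine ⟨?_, ?_⟩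
  · subst hS
    intro i
    have h1 : 1 ≤ √n := one_le_sqrt.2 (by exact_mod_cast i.pos)
    rw [hx i, Set.mem_Icc, ← abs_le]
    calc |t / √n| = |t| / √n := by rw [abs_div, abs_of_pos (by linarith : 0 < √n)]
      _ ≤ |t| := div_le_self (abs_nonneg t) h1
      _ ≤ 4 := by linarith [abs_le.2 ht]
  · rw [hf₁p, hf₂p, hxp]
    refine (isParetoOptimal_dist_of_dist_add_dist_eq ?_ S).comp_strictMonoOn
      strictMonoOn_one_sub_exp_neg_sq (fun _ => dist_nonneg) (fun _ => dist_nonneg)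
    rw [dist_comm]
    exact dist_add_dist_of_mem_segment (smul_mem_segment_self_neg p ht)

/-- For the FF bi-objective function on [−4,4]ⁿ, every point (t/√n,...,t/√n)
with t ∈ [−1,1] is Pareto optimal. -/
theorem ff_segment_pareto (n : ℕ) (hn : 1 ≤ n)
    (S : Set (EuclideanSpace ℝ (Fin n)))
    (hS : S = {x | ∀ i, x i ∈ Set.Icc (-4 : ℝ) 4})
    (f₁ f₂ : EuclideanSpace ℝ (Fin n) → ℝ)
    (hf₁ : ∀ x, f₁ x = 1 - Real.exp (-(∑ i, (x i - 1 / Real.sqrt n) ^ 2)))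
    (hf₂ : ∀ x, f₂ x = 1 - Real.exp (-(∑ i, (x i + 1 / Real.sqrt n) ^ 2)))
    (t : ℝ) (ht : t ∈ Set.Icc (-1 : ℝ) 1)
    (x : EuclideanSpace ℝ (Fin n)) (hx : ∀ i, x i = t / Real.sqrt n) :
    x ∈ S ∧ ¬ ∃ y ∈ S, (f₁ y ≤ f₁ x ∧ f₂ y ≤ f₂ x) ∧ (f₁ y < f₁ x ∨ f₂ y < f₂ x) :=
  ff_segment_pareto_general n S hS f₁ f₂ hf₁ hf₂ t ht x hx
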